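/- Let k be a field of characteristic zero and L a Lie algebra over k. Then the set of primitive elements of the universal enveloping algebra U(L) (i.e., elements a with Δ(a) = a⊗1 + 1⊗a) is exactly the image of L under the canonical embedding L → U(L). -/

import Mathlib

/-!
Put `S = φ L`: a set of primitive elements generating `A`, whose commutators lie in its span.
Let `F n = wordFiltration k S n` be the span of the products of at most `n` elements of `S`, and
`π = augmentationProjection k A = id - η ∘ ε` in the convolution algebra of `A`. Since the coproduct of a product of primitives is the sum over its
unshuffles, `π ^ (n + 1)` kills every product of at most `n` primitives and sends a product of
`n + 1` elements of `S` to the sum of its `(n + 1)!` reorderings, which is `(n + 1)!` times the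
product modulo `F n`, commutators having lower degree. A primitive `a` is killed by `π ^ (n + 1)`
for `n ≥ 1`, so in characteristic zero `a ∈ F (n + 1)` forces `a ∈ F n`. Descending to
`F 1 = k + span S`, the counit removes the scalar part.
-/

open TensorProduct WithConv

namespace List

variable {α : Type*}

def unshuffles : List α → List (List α × List α)
  | [] => [([], [])]
  | x :: l => l.unshuffles.map (Prod.map (x :: ·) id) ++ l.unshuffles.map (Prod.map id (x :: ·))

theorem perm_of_mem_unshuffles {l : List α} {p : List α × List α} (hp : p ∈ l.unshuffles) :
    (p.1 ++ p.2).Perm l := by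
  induction l generalizing p with
  | nil => simp_all [unshuffles]
  | cons x l ih =>
    simp only [unshuffles, mem_append, mem_map] at hp
    rcases hp with ⟨q, hq, rfl⟩ | ⟨q, hq, rfl⟩
    · exact (ih hq).cons x
    · exact perm_middle.trans ((ih hq).cons x)

theorem countP_unshuffles_length_fst (l : List α) (k : ℕ) :
    l.unshuffles.countP (fun p => p.1.length = k) = l.length.choose k := by
  induction l generalizing k with
  | nil => cases k <;> simp [unshuffles]
  | cons x l ih =>
    cases k with
    | zero => simpa [unshuffles, countP_append, countP_map, Function.comp_def] using ih 0
    | succ k =>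
      simp [unshuffles, countP_append, countP_map, Function.comp_def, ih, Nat.choose_succ_succ']

end List

theorem SModEq.list_sum {R M ι : Type*} [Ring R] [AddCommGroup M] [Module R M]
    {U : Submodule R M} {l : List ι} {f g : ι → M} (h : ∀ i ∈ l, f i ≡ g i [SMOD U]) :
    (l.map f).sum ≡ (l.map g).sum [SMOD U] := by
  induction l with
  | nil => rfl
  | cons i l ih =>
    simp only [List.map_cons, List.sum_cons]
    exact (h i List.mem_cons_self).add (ih fun j hj => h j (List.mem_cons_of_mem i hj))

section WordFiltration

variable {R A : Type*}

section Semiring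

variable [CommSemiring R] [Semiring A] [Algebra R A]

variable (R) in
def wordFiltration (S : Set A) (n : ℕ) : Submodule R A :=
  Submodule.span R {a | ∃ l : List A, (∀ x ∈ l, x ∈ S) ∧ l.length ≤ n ∧ l.prod = a}

variable {S : Set A} {m n : ℕ}

theorem list_prod_mem_wordFiltration {l : List A} (hl : ∀ x ∈ l, x ∈ S) (hn : l.length ≤ n) :
    l.prod ∈ wordFiltration R S n :=
  Submodule.subset_span ⟨l, hl, hn, rfl⟩

theorem wordFiltration_mono : Monotone (wordFiltration R S) :=
  fun _ _ hmn => Submodule.span_mono fun _ ⟨l, hl, hlen, hprod⟩ => ⟨l, hl, hlen.trans hmn, hprod⟩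

theorem span_le_wordFiltration_one : Submodule.span R S ≤ wordFiltration R S 1 :=
  Submodule.span_le.2 fun x hx => by
    simpa using list_prod_mem_wordFiltration (R := R) (l := [x]) (by simpa using hx) le_rfl

theorem wordFiltration_one_le : wordFiltration R S 1 ≤ 1 ⊔ Submodule.span R S := by
  refine Submodule.span_le.2 ?_
  rintro _ ⟨_ | ⟨x, _ | _⟩, hl, hlen, rfl⟩
  · exact Submodule.mem_sup_left (Submodule.one_le.1 le_rfl)
  · simpa using Submodule.mem_sup_right (Submodule.subset_span (hl x List.mem_cons_self))
  · simp at hlen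

theorem mul_mem_wordFiltration {a b : A} (ha : a ∈ wordFiltration R S m)
    (hb : b ∈ wordFiltration R S n) : a * b ∈ wordFiltration R S (m + n) := by
  refine (?_ : wordFiltration R S m * wordFiltration R S n ≤ _) (Submodule.mul_mem_mul ha hb)
  rw [wordFiltration, wordFiltration, Submodule.span_mul_span]
  refine Submodule.span_mono ?_
  rintro _ ⟨_, ⟨l₁, hl₁, hlen₁, rfl⟩, _, ⟨l₂, hl₂, hlen₂, rfl⟩, rfl⟩
  refine ⟨l₁ ++ l₂, fun x hx => ?_, by simp; omega, List.prod_append⟩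
  rcases List.mem_append.1 hx with hx | hx
  exacts [hl₁ x hx, hl₂ x hx]

theorem exists_mem_wordFiltration_of_mem_adjoin {a : A} (ha : a ∈ Algebra.adjoin R S) :
    ∃ n, a ∈ wordFiltration R S n := by
  rw [← Subalgebra.mem_toSubmodule, Algebra.adjoin_eq_span] at ha
  refine (Submodule.mem_iSup_of_directed _ wordFiltration_mono.directed_le).1 ?_
  refine Submodule.span_le.2 (fun x hx => ?_) ha
  obtain ⟨l, hl, rfl⟩ := Submonoid.exists_list_of_mem_closure hx
  exact Submodule.mem_iSup_of_mem l.length (list_prod_mem_wordFiltration hl le_rfl)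

end Semiring

variable [CommRing R] [Ring A] [Algebra R A] {S : Set A} {n : ℕ}

theorem SModEq.mul_left_wordFiltration {x a b : A} (hx : x ∈ S)
    (h : a ≡ b [SMOD wordFiltration R S n]) : x * a ≡ x * b [SMOD wordFiltration R S (n + 1)] := by
  rw [SModEq.sub_mem, ← mul_sub, add_comm]
  exact mul_mem_wordFiltration (span_le_wordFiltration_one (Submodule.subset_span hx))
    (SModEq.sub_mem.1 h)

theorem list_prod_smodEq_of_perm
    (hcomm : ∀ x ∈ S, ∀ y ∈ S, x * y - y * x ∈ Submodule.span R S)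
    {l₁ l₂ : List A} (h : l₁.Perm l₂) (hl : ∀ x ∈ l₁, x ∈ S) (hn : l₁.length = n + 1) :
    l₁.prod ≡ l₂.prod [SMOD wordFiltration R S n] := by
  induction h generalizing n with
  | nil => simp at hn
  | cons x h ih =>
    rcases n with _ | n
    · obtain rfl : _ = [] := List.length_eq_zero_iff.1 (by simpa using hn)
      rw [List.perm_nil.1 h.symm]
    · simp only [List.prod_cons]
      exact .mul_left_wordFiltration (hl x List.mem_cons_self)
        (ih (fun y hy => hl y (List.mem_cons_of_mem x hy)) (by simpa using hn))
  | swap x y t =>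
    rw [SModEq.sub_mem]
    have hxy := hcomm y (hl y (by simp)) x (hl x (by simp))
    have ht := list_prod_mem_wordFiltration (R := R) (n := t.length)
      (fun z hz => hl z (by simp [hz])) le_rfl
    have := mul_mem_wordFiltration (span_le_wordFiltration_one hxy) ht
    simp only [List.length_cons] at hn
    rw [show 1 + t.length = n by omega] at this
    simpa [← mul_assoc, sub_mul] using this
  | trans h₁ h₂ ih₁ ih₂ =>
    exact (ih₁ hl hn).trans (ih₂ (fun x hx => hl x (h₁.symm.subset hx)) (h₁.length_eq ▸ hn))

end WordFiltration

namespace Bialgebra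

section Semiring

variable (R A : Type*) [CommSemiring R] [Semiring A] [Bialgebra R A]

def primitives : Submodule R A where
  carrier := {a | Coalgebra.comul (R := R) a = a ⊗ₜ 1 + 1 ⊗ₜ a}
  add_mem' {a b} (ha : _ = _) (hb : _ = _) := by
    change _ = _
    rw [map_add, ha, hb, add_tmul, tmul_add]
    abel
  zero_mem' := by simp
  smul_mem' c a (ha : _ = _) := by
    change _ = _
    rw [map_smul, ha, smul_add, smul_tmul', ← tmul_smul]

variable {R A}

theorem mem_primitives {a : A} :
    a ∈ primitives R A ↔ Coalgebra.comul (R := R) a = a ⊗ₜ 1 + 1 ⊗ₜ a := Iff.rfl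

theorem comul_list_prod_eq_sum_unshuffles {l : List A} (hl : ∀ x ∈ l, x ∈ primitives R A) :
    Coalgebra.comul (R := R) l.prod =
      (l.unshuffles.map fun p => p.1.prod ⊗ₜ[R] p.2.prod).sum := by
  induction l with
  | nil => simp [List.unshuffles, Algebra.TensorProduct.one_def]
  | cons x l ih =>
    rw [List.prod_cons, comul_mul, hl x List.mem_cons_self,
      ih fun y hy => hl y (List.mem_cons_of_mem x hy)]
    simp [List.unshuffles, add_mul, ← List.sum_map_mul_left, Function.comp_def]

theorem convMul_apply_list_prod_eq_sum_unshuffles (f g : WithConv (A →ₗ[R] A)) {l : List A}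
    (hl : ∀ x ∈ l, x ∈ primitives R A) :
    (f * g) l.prod = (l.unshuffles.map fun p => f p.1.prod * g p.2.prod).sum := by
  simp [LinearMap.convMul_apply, comul_list_prod_eq_sum_unshuffles hl, map_list_sum,
    Function.comp_def]

end Semiring

variable {R A : Type*} [CommRing R] [Ring A] [Bialgebra R A]

theorem counit_eq_zero_of_mem_primitives {a : A} (ha : a ∈ primitives R A) :
    Coalgebra.counit (R := R) a = 0 := by
  have h := congrArg (fun t => Coalgebra.counit (R := R) (TensorProduct.lid R A t))
    (Coalgebra.rTensor_counit_comul (R := R) a)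
  simpa [mem_primitives.1 ha] using h

variable (R A) in
noncomputable def augmentationProjection : WithConv (A →ₗ[R] A) :=
  toConv LinearMap.id - 1

theorem augmentationProjection_apply (a : A) :
    augmentationProjection R A a = a - algebraMap R A (Coalgebra.counit a) := rfl

theorem augmentationProjection_one : augmentationProjection R A 1 = 0 := by
  simp [augmentationProjection_apply]

theorem augmentationProjection_apply_of_mem_primitives {a : A} (ha : a ∈ primitives R A) :
    augmentationProjection R A a = a := by
  simp [augmentationProjection_apply, counit_eq_zero_of_mem_primitives ha]

theorem augmentationProjection_pow_apply_list_prod_eq_zero {l : List A}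
    (hl : ∀ x ∈ l, x ∈ primitives R A) {n : ℕ} (hn : l.length < n) :
    (augmentationProjection R A ^ n) l.prod = 0 := by
  induction n generalizing l with
  | zero => simp at hn
  | succ n ih =>
    rw [pow_succ', convMul_apply_list_prod_eq_sum_unshuffles _ _ hl]
    refine List.sum_eq_zero fun t ht => ?_
    obtain ⟨⟨u, v⟩, hp, rfl⟩ := List.mem_map.1 ht
    have hperm := List.perm_of_mem_unshuffles hp
    rcases u with _ | ⟨x, u⟩
    · simp [augmentationProjection_one]
    · have hlen := hperm.length_eq
      simp only [List.length_append, List.length_cons] at hlen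
      rw [ih (fun y hy => hl y (hperm.subset (by simp [hy]))) (by dsimp only; omega),
        mul_zero]

theorem augmentationProjection_pow_succ_apply_list_prod {l : List A}
    (hl : ∀ x ∈ l, x ∈ primitives R A) {n : ℕ} (hn : l.length = n + 1) :
    (augmentationProjection R A ^ (n + 1)) l.prod =
      ((l.unshuffles.filter fun p => p.1.length = 1).map fun p =>
        p.1.prod * (augmentationProjection R A ^ n) p.2.prod).sum := by
  have hperm {p : List A × List A} (hp : p ∈ l.unshuffles) := List.perm_of_mem_unshuffles hp
  -- `π 1 = 0`, and a left factor of two or more letters leaves fewer than `n` letters for `π ^ n`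
  have hrest : ((l.unshuffles.filter fun p => ¬p.1.length = 1).map fun p =>
      augmentationProjection R A p.1.prod * (augmentationProjection R A ^ n) p.2.prod).sum = 0 := by
    refine List.sum_eq_zero fun t ht => ?_
    obtain ⟨⟨u, v⟩, hp, rfl⟩ := List.mem_map.1 ht
    obtain ⟨hp, hu⟩ := List.mem_filter.1 hp
    rcases u with _ | ⟨x, _ | ⟨y, u⟩⟩
    · simp [augmentationProjection_one]
    · simp at hu
    · have hlen := (hperm hp).length_eq
      simp only [List.length_append, List.length_cons] at hlen
      rw [augmentationProjection_pow_apply_list_prod_eq_zero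
        (fun z hz => hl z ((hperm hp).subset (by simp [hz]))) (by dsimp only; omega), mul_zero]
  rw [pow_succ', convMul_apply_list_prod_eq_sum_unshuffles _ _ hl,
    ← List.sum_map_filter_add_sum_map_filter_not (fun p => p.1.length = 1), hrest, add_zero]
  refine congrArg List.sum (List.map_congr_left fun p hp => ?_)
  obtain ⟨hp, hp1⟩ := List.mem_filter.1 hp
  obtain ⟨x, hx⟩ := List.length_eq_one_iff.1 (by simpa using hp1)
  rw [hx, List.prod_singleton, augmentationProjection_apply_of_mem_primitives
    (hl x ((hperm hp).subset (by simp [hx])))]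

theorem augmentationProjection_pow_apply_list_prod_smodEq {S : Set A}
    (hS : S ⊆ primitives R A) (hcomm : ∀ x ∈ S, ∀ y ∈ S, x * y - y * x ∈ Submodule.span R S)
    {l : List A} (hl : ∀ x ∈ l, x ∈ S) {n : ℕ} (hn : l.length = n + 1) :
    (augmentationProjection R A ^ (n + 1)) l.prod ≡ (n + 1).factorial • l.prod
      [SMOD wordFiltration R S n] := by
  induction n generalizing l with
  | zero =>
    obtain ⟨x, rfl⟩ := List.length_eq_one_iff.1 hn
    simp [augmentationProjection_apply_of_mem_primitives (hS (hl x List.mem_cons_self))]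
  | succ n ih =>
    rw [augmentationProjection_pow_succ_apply_list_prod (fun x hx => hS (hl x hx)) hn]
    calc _ ≡ ((l.unshuffles.filter fun p => p.1.length = 1).map
              fun _ => (n + 1).factorial • l.prod).sum [SMOD wordFiltration R S (n + 1)] := by
          refine SModEq.list_sum fun p hp => ?_
          obtain ⟨hp, hp1⟩ := List.mem_filter.1 hp
          obtain ⟨x, hx⟩ := List.length_eq_one_iff.1 (by simpa using hp1)
          have hperm : (x :: p.2).Perm l := by simpa [hx] using List.perm_of_mem_unshuffles hp
          have hxv : ∀ z ∈ x :: p.2, z ∈ S := fun z hz => hl z (hperm.subset hz)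
          have hlen := hperm.length_eq
          rw [List.length_cons] at hlen
          calc _ ≡ x * ((n + 1).factorial • p.2.prod) [SMOD wordFiltration R S (n + 1)] := by
                rw [hx, List.prod_singleton]
                exact .mul_left_wordFiltration (hxv x List.mem_cons_self)
                  (ih (fun z hz => hxv z (List.mem_cons_of_mem x hz)) (by omega))
            _ = (n + 1).factorial • (x :: p.2).prod := by rw [mul_smul_comm, List.prod_cons]
            _ ≡ (n + 1).factorial • l.prod [SMOD wordFiltration R S (n + 1)] :=
                (list_prod_smodEq_of_perm hcomm hperm hxv (hperm.length_eq.trans hn)).nsmul _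
      _ = (n + 1 + 1).factorial • l.prod := by
          rw [List.map_const', List.sum_replicate, ← List.countP_eq_length_filter,
            List.countP_unshuffles_length_fst, hn, Nat.choose_one_right, smul_smul,
            Nat.factorial_succ (n + 1)]

theorem augmentationProjection_pow_apply_smodEq {S : Set A}
    (hS : S ⊆ primitives R A) (hcomm : ∀ x ∈ S, ∀ y ∈ S, x * y - y * x ∈ Submodule.span R S)
    {n : ℕ} {a : A} (ha : a ∈ wordFiltration R S (n + 1)) :
    (augmentationProjection R A ^ (n + 1)) a ≡ (n + 1).factorial • a
      [SMOD wordFiltration R S n] := by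
  suffices wordFiltration R S (n + 1) ≤ (wordFiltration R S n).comap
      ((augmentationProjection R A ^ (n + 1)).ofConv - (n + 1).factorial • LinearMap.id) by
    simpa [SModEq.sub_mem] using this ha
  refine Submodule.span_le.2 ?_
  rintro _ ⟨l, hl, hlen, rfl⟩
  simp only [SetLike.mem_coe, Submodule.mem_comap, LinearMap.sub_apply, LinearMap.smul_apply,
    LinearMap.id_apply, ← SModEq.sub_mem]
  rcases hlen.lt_or_eq with hlt | heq
  · rw [augmentationProjection_pow_apply_list_prod_eq_zero (fun x hx => hS (hl x hx)) hlt]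
    exact (SModEq.zero.2 (nsmul_mem (list_prod_mem_wordFiltration hl (by omega)) _)).symm
  · exact augmentationProjection_pow_apply_list_prod_smodEq hS hcomm hl heq

theorem mem_span_of_mem_primitives_of_mem_one_sup_span {S : Set A} (hS : S ⊆ primitives R A)
    {a : A} (ha : a ∈ primitives R A) (haS : a ∈ 1 ⊔ Submodule.span R S) :
    a ∈ Submodule.span R S := by
  obtain ⟨_, ⟨c, rfl⟩, s, hs, rfl⟩ := Submodule.mem_sup.1 haS
  have hs' : s ∈ primitives R A := Submodule.span_le.2 hS hs
  have hc : c = 0 := by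
    simpa [counit_eq_zero_of_mem_primitives hs'] using counit_eq_zero_of_mem_primitives ha
  simpa [hc] using hs

section Field

variable {k : Type*} [Field k] [CharZero k] [Bialgebra k A]

theorem mem_wordFiltration_of_mem_primitives {S : Set A} (hS : S ⊆ primitives k A)
    (hcomm : ∀ x ∈ S, ∀ y ∈ S, x * y - y * x ∈ Submodule.span k S)
    {a : A} (ha : a ∈ primitives k A) {n : ℕ} (haS : a ∈ wordFiltration k S (n + 2)) :
    a ∈ wordFiltration k S (n + 1) := by
  have h := augmentationProjection_pow_apply_smodEq hS hcomm haS
  have h0 : (augmentationProjection k A ^ (n + 2)) a = 0 := by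
    simpa using augmentationProjection_pow_apply_list_prod_eq_zero (l := [a])
      (by simpa using ha) (n := n + 2) (by simp)
  rw [h0, ← Nat.cast_smul_eq_nsmul k] at h
  exact (Submodule.smul_mem_iff _ (Nat.cast_ne_zero.2 (Nat.factorial_ne_zero _))).1
    (SModEq.zero.1 h.symm)

theorem primitives_eq_span {S : Set A} (hS : S ⊆ primitives k A)
    (hcomm : ∀ x ∈ S, ∀ y ∈ S, x * y - y * x ∈ Submodule.span k S)
    (hgen : Algebra.adjoin k S = ⊤) : primitives k A = Submodule.span k S := by
  refine le_antisymm (fun a ha => ?_) (Submodule.span_le.2 hS)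
  obtain ⟨n, hn⟩ := exists_mem_wordFiltration_of_mem_adjoin (R := k) (S := S) (a := a)
    (by simp [hgen])
  have hdescent : ∀ m, a ∈ wordFiltration k S (m + 1) → a ∈ wordFiltration k S 1 := by
    intro m
    induction m with
    | zero => exact id
    | succ m ih => exact fun h => ih (mem_wordFiltration_of_mem_primitives hS hcomm ha h)
  exact mem_span_of_mem_primitives_of_mem_one_sup_span hS ha
    (wordFiltration_one_le (hdescent n (wordFiltration_mono n.le_succ hn)))

end Field

end Bialgebra

attribute [local instance 100] LieRing.ofAssociativeRing

theorem adjoin_range_eq_top_of_existsUnique_algHom {k L : Type*} {A : Type u} [CommRing k]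
    [LieRing L] [LieAlgebra k L] [Ring A] [Algebra k A] (φ : L →ₗ⁅k⁆ A)
    (huniv : ∀ (B : Type u) [Ring B] [Algebra k B] (f : L →ₗ⁅k⁆ B),
      ∃! g : A →ₐ[k] B, ∀ x : L, g (φ x) = f x) :
    Algebra.adjoin k (Set.range φ) = ⊤ := by
  set B := Algebra.adjoin k (Set.range φ)
  let φB : L →ₗ⁅k⁆ B :=
    { (φ : L →ₗ[k] A).codRestrict (Subalgebra.toSubmodule B)
        fun x => Algebra.subset_adjoin ⟨x, rfl⟩ with
      map_lie' := fun {x y} => Subtype.ext (φ.map_lie x y) }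
  obtain ⟨g, hg, -⟩ := huniv B φB
  have hid : B.val.comp g = AlgHom.id k A :=
    (huniv A φ).unique (fun x => congrArg Subtype.val (hg x)) (fun _ => rfl)
  refine eq_top_iff.2 fun a _ => ?_
  have hga : (g a : A) = a := DFunLike.congr_fun hid a
  exact hga ▸ (g a).2

/-- Let `k` be a field of characteristic zero and `L` a Lie algebra over `k`.
The universal enveloping algebra `U(L)` is characterized by its universal property (`huniv`),
and its bialgebra structure is the one making the elements of `L` primitive (`hprim`).
Then the set of primitive elements of `U(L)` (elements `a` with `Δ a = a ⊗ 1 + 1 ⊗ a`) is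
exactly the image of `L` under the canonical map `φ : L → U(L)`. -/
theorem primitives_of_universalEnveloping_eq_range
    (k : Type u) [Field k] [CharZero k]
    (L : Type u) [LieRing L] [LieAlgebra k L]
    (A : Type u) [Ring A] [Bialgebra k A] (φ : L →ₗ⁅k⁆ A)
    -- `(A, φ)` is the universal enveloping algebra of `L`:
    (huniv : ∀ (B : Type u) [Ring B] [Algebra k B] (f : L →ₗ⁅k⁆ B),
      ∃! g : A →ₐ[k] B, ∀ x : L, g (φ x) = f x)
    -- the comultiplication is the one for which elements of `L` are primitive:
    (hprim : ∀ x : L,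
      Coalgebra.comul (R := k) (φ x) = (φ x) ⊗ₜ[k] 1 + 1 ⊗ₜ[k] (φ x)) :
    {a : A | Coalgebra.comul (R := k) a = a ⊗ₜ[k] 1 + 1 ⊗ₜ[k] a} = Set.range φ := by
  have hS : Set.range φ ⊆ Bialgebra.primitives k A := by
    rintro _ ⟨x, rfl⟩
    exact hprim x
  have hcomm : ∀ a ∈ Set.range φ, ∀ b ∈ Set.range φ,
      a * b - b * a ∈ Submodule.span k (Set.range φ) := by
    rintro _ ⟨x, rfl⟩ _ ⟨y, rfl⟩
    exact Submodule.subset_span ⟨⁅x, y⁆, by rw [LieHom.map_lie, Ring.lie_def]⟩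
  have h := Bialgebra.primitives_eq_span hS hcomm
    (adjoin_range_eq_top_of_existsUnique_algHom φ huniv)
  rw [← LieHom.coe_toLinearMap, ← LinearMap.coe_range, Submodule.span_eq] at h
  exact congrArg SetLike.coe h
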